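/- For integers p1 ≥ 2 and q2, q3 ≥ 1 with p2 := (q2+1)(q3+1) - 1, the rational function φ(t) = (1-t^{p1})(1-t^{p1 p2})/((1-t)(1-t^{p2})) equals its own Saito dual with respect to d = p1 p2. -/
import Mathlib


open RatFunc

lemma one_sub_X_pow_ne_zero (n : ℕ) (hn : 1 ≤ n) :
    (1 - (RatFunc.X : RatFunc ℚ) ^ n) ≠ 0 := by
  intro h
  have hx : (RatFunc.X : RatFunc ℚ) ^ n = 1 := by
    exact (sub_eq_zero.mp h).symm
  have : (Polynomial.X : Polynomial ℚ) ^ n = 1 := by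
    apply RatFunc.algebraMap_injective ℚ
    simpa [map_pow, RatFunc.algebraMap_X] using hx
  have := congrArg Polynomial.natDegree this
  simp [Polynomial.natDegree_X_pow] at this
  omega

theorem type_III_char_function_selfdual (p1 q2 q3 : ℕ) (h1 : 2 ≤ p1) (h2 : 1 ≤ q2) (h3 : 1 ≤ q3)
    (p2 : ℕ) (hp2 : p2 = (q2 + 1) * (q3 + 1) - 1) :
    let d : ℕ := p1 * p2
    let X : RatFunc ℚ := RatFunc.X
    (1 - X ^ (d / p1)) ^ (-(1 : ℤ)) * (1 - X ^ (d / (p1 * p2))) ^ (-(1 : ℤ))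
        * (1 - X ^ (d / 1)) ^ ((1 : ℤ)) * (1 - X ^ (d / p2)) ^ ((1 : ℤ))
      = (1 - X ^ p1) * (1 - X ^ (p1 * p2)) / ((1 - X) * (1 - X ^ p2)) := by
  intro d X
  have hp1pos : 0 < p1 := by omega
  have hp2pos : 0 < p2 := by
    subst hp2
    have : 4 ≤ (q2 + 1) * (q3 + 1) := by nlinarith
    omega
  have e1 : d / p1 = p2 := by
    simp only [d]; exact Nat.mul_div_cancel_left p2 hp1pos
  have e2 : d / (p1 * p2) = 1 := Nat.div_self (by positivity)
  have e3 : d / 1 = d := Nat.div_one d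
  have e4 : d / p2 = p1 := Nat.mul_div_cancel p1 hp2pos
  rw [e1, e2, e3, e4]
  have n1 := one_sub_X_pow_ne_zero p2 hp2pos
  have n2 := one_sub_X_pow_ne_zero 1 le_rfl
  have n3 : (1 - X) ≠ 0 := by simpa using n2
  rw [zpow_neg, zpow_neg, zpow_one, zpow_one, zpow_one, pow_one]
  field_simp [X, n1]
  ring
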